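/- Let x, x̂ ∈ ℝ^N be partitioned into M disjoint blocks, let T̃_1, ..., T̃_L ⊆ {1,...,M} be pairwise disjoint block index sets with union T̃, and let weights w_i = ω_j if i ∈ T̃_j and w_i = 1 if i ∉ T̃, where 1 ≥ ω_1 ≥ ... ≥ ω_L ≥ 0. Suppose ∑_i w_i ‖x̂[i]‖_2 ≤ ∑_i w_i ‖x[i]‖_2 and set h = x̂ − x. Then for any Γ ⊆ {1,...,M}: ∑_{i∈Γᶜ}‖h[i]‖_2 ≤ ω_L ∑_{i∈Γ}‖h[i]‖_2 + (1−ω_1) ∑_{i ∈ (Γ ∪ T̃) \ (T̃ ∩ Γ)} ‖h[i]‖_2 + ∑_{i=2}^L (ω_{i−1}−ω_i) ∑_{j ∈ (Γ ∪ ∪_{m=i}^L T̃_m) \ (∪_{m=i}^L T̃_m ∩ Γ)} ‖h[j]‖_2 + 2( ∑_{i=1}^L ω_i ∑_{j∈Γᶜ}‖x[j]‖_2 + (1−∑_{i=1}^L ω_i) ∑_{j∈T̃ᶜ∩Γᶜ}‖x[j]‖_2 − ∑_{i=1}^L (∑_{m=1}^L ω_m − ω_i) ∑_{j∈T̃_i∩Γᶜ}‖x[j]‖_2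 ). -/
import Mathlib

/-- The ℓ2 norm of the `i`-th block of `v`, for the block structure given by the
block-assignment map `b : Fin N → Fin M`. -/
noncomputable def blkNorm {N M : ℕ} (b : Fin N → Fin M) (v : Fin N → ℝ) (i : Fin M) : ℝ :=
  Real.sqrt (∑ j ∈ Finset.univ.filter (fun j => b j = i), v j ^ 2)

lemma blkNorm_nonneg {N M : ℕ} (b : Fin N → Fin M) (v : Fin N → ℝ) (i : Fin M) :
    0 ≤ blkNorm b v i := Real.sqrt_nonneg _

lemma blkNorm_sub_le {N M : ℕ} (b : Fin N → Fin M) (u v : Fin N → ℝ) (i : Fin M) :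
    blkNorm b (u - v) i ≤ blkNorm b u i + blkNorm b v i := by
  unfold blkNorm
  set s := Finset.univ.filter (fun j => b j = i) with hs
  have hu : (0:ℝ) ≤ ∑ j ∈ s, u j ^ 2 := Finset.sum_nonneg fun j _ => sq_nonneg _
  have hv : (0:ℝ) ≤ ∑ j ∈ s, v j ^ 2 := Finset.sum_nonneg fun j _ => sq_nonneg _
  have cs : ∑ j ∈ s, (-(u j)) * v j ≤
      Real.sqrt (∑ j ∈ s, u j ^ 2) * Real.sqrt (∑ j ∈ s, v j ^ 2) := by
    have := Real.sum_mul_le_sqrt_mul_sqrt s (fun j => -(u j)) v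
    simpa using this
  have hle : ∑ j ∈ s, (u j - v j) ^ 2 ≤
      (Real.sqrt (∑ j ∈ s, u j ^ 2) + Real.sqrt (∑ j ∈ s, v j ^ 2)) ^ 2 := by
    have e1 : ∑ j ∈ s, (u j - v j) ^ 2
        = ∑ j ∈ s, u j ^ 2 + 2 * ∑ j ∈ s, (-(u j)) * v j + ∑ j ∈ s, v j ^ 2 := by
      have e0 : ∀ j, (u j - v j) ^ 2 = u j ^ 2 + 2 * (-(u j) * v j) + v j ^ 2 :=
        fun j => by ring
      simp_rw [e0]
      rw [Finset.sum_add_distrib, Finset.sum_add_distrib, ← Finset.mul_sum]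
    rw [e1, add_sq, Real.sq_sqrt hu, Real.sq_sqrt hv]
    nlinarith [cs]
  calc Real.sqrt (∑ j ∈ s, (fun j => u j - v j) j ^ 2)
      ≤ Real.sqrt ((Real.sqrt (∑ j ∈ s, u j ^ 2) + Real.sqrt (∑ j ∈ s, v j ^ 2)) ^ 2) := by
        apply Real.sqrt_le_sqrt; simpa using hle
    _ = _ := Real.sqrt_sq (by positivity)

lemma tele (ω : ℕ → ℝ) (j L : ℕ) (hjL : j ≤ L) :
    ∑ k ∈ Finset.Ioc j L, (ω (k - 1) - ω k) = ω j - ω L := by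
  induction L with
  | zero => interval_cases j; simp
  | succ L ih =>
    rcases Nat.eq_or_lt_of_le hjL with rfl | hlt
    · simp
    · have hj : j ≤ L := Nat.lt_succ_iff.mp hlt
      rw [Finset.sum_Ioc_succ_top hj, ih hj]
      simp

theorem stmt_13 (N M L : ℕ) (hL : 0 < L) (b : Fin N → Fin M)
    (x xhat : Fin N → ℝ) (T : ℕ → Finset (Fin M)) (ω : ℕ → ℝ) (w : Fin M → ℝ)
    (hdisj : ∀ i ∈ Finset.Icc 1 L, ∀ j ∈ Finset.Icc 1 L, i ≠ j → Disjoint (T i) (T j))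
    (hω1 : ω 1 ≤ 1) (hωL : 0 ≤ ω L)
    (hωmono : ∀ i j : ℕ, 1 ≤ i → i ≤ j → j ≤ L → ω j ≤ ω i)
    (hwin : ∀ j ∈ Finset.Icc 1 L, ∀ i ∈ T j, w i = ω j)
    (hwout : ∀ i : Fin M, i ∉ (Finset.Icc 1 L).biUnion T → w i = 1)
    (hmin : ∑ i : Fin M, w i * blkNorm b xhat i ≤ ∑ i : Fin M, w i * blkNorm b x i)
    (h : Fin N → ℝ) (hh : h = xhat - x) (Γ : Finset (Fin M)) :
    ∑ i ∈ Γᶜ, blkNorm b h i ≤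
      ω L * ∑ i ∈ Γ, blkNorm b h i +
      (1 - ω 1) *
        ∑ i ∈ (Γ ∪ (Finset.Icc 1 L).biUnion T) \ ((Finset.Icc 1 L).biUnion T ∩ Γ),
          blkNorm b h i +
      (∑ i ∈ Finset.Icc 2 L, (ω (i - 1) - ω i) *
        ∑ j ∈ (Γ ∪ (Finset.Icc i L).biUnion T) \ ((Finset.Icc i L).biUnion T ∩ Γ),
          blkNorm b h j) +
      2 * ((∑ i ∈ Finset.Icc 1 L, ω i) * ∑ j ∈ Γᶜ, blkNorm b x j +
        (1 - ∑ i ∈ Finset.Icc 1 L, ω i) *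
          ∑ j ∈ ((Finset.Icc 1 L).biUnion T)ᶜ ∩ Γᶜ, blkNorm b x j -
        ∑ i ∈ Finset.Icc 1 L, ((∑ m ∈ Finset.Icc 1 L, ω m) - ω i) *
          ∑ j ∈ T i ∩ Γᶜ, blkNorm b x j) := by
  classical
  subst hh
  set n : Fin M → ℝ := blkNorm b (xhat - x) with hn
  set a : Fin M → ℝ := blkNorm b x with ha
  set ahat : Fin M → ℝ := blkNorm b xhat with hahat
  set W : Finset (Fin M) := (Finset.Icc 1 L).biUnion T with hW
  -- nonnegativity of weights
  have hw0 : ∀ i, 0 ≤ w i := by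
    intro i
    by_cases hiW : i ∈ W
    · obtain ⟨j, hj, hij⟩ := Finset.mem_biUnion.mp hiW
      rw [hwin j hj i hij]
      rw [Finset.mem_Icc] at hj
      exact le_trans hωL (hωmono j L hj.1 hj.2 le_rfl)
    · rw [hwout i hiW]; norm_num
  -- pointwise decomposition of the weights
  have hwpt : ∀ i : Fin M, w i = ω L + (if i ∈ W then 0 else (1 - ω 1)) +
      ∑ k ∈ Finset.Icc 2 L,
        (if i ∈ (Finset.Icc k L).biUnion T then 0 else (ω (k - 1) - ω k)) := by
    intro i
    by_cases hiW : i ∈ W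
    · obtain ⟨j, hj, hij⟩ := Finset.mem_biUnion.mp hiW
      have hj1 : 1 ≤ j := (Finset.mem_Icc.mp hj).1
      have hjL : j ≤ L := (Finset.mem_Icc.mp hj).2
      have hwi : w i = ω j := hwin j hj i hij
      have hcongr : ∀ k ∈ Finset.Icc 2 L,
          (if i ∈ (Finset.Icc k L).biUnion T then 0 else (ω (k - 1) - ω k))
            = (if j < k then (ω (k - 1) - ω k) else 0) := by
        intro k hk
        rw [Finset.mem_Icc] at hk
        by_cases hkj : k ≤ j
        · rw [if_pos, if_neg (by omega)]
          exact Finset.mem_biUnion.mpr ⟨j, Finset.mem_Icc.mpr ⟨hkj, hjL⟩, hij⟩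
        · rw [if_neg, if_pos (by omega)]
          intro hmem
          obtain ⟨m, hm1, him⟩ := Finset.mem_biUnion.mp hmem
          have hm' : m ∈ Finset.Icc 1 L := by
            rw [Finset.mem_Icc] at hm1 ⊢; omega
          by_cases hmj : m = j
          · subst hmj; rw [Finset.mem_Icc] at hm1; omega
          · exact (Finset.disjoint_left.mp (hdisj m hm' j hj hmj)) him hij
      have hfilter : (Finset.Icc 2 L).filter (fun k => j < k) = Finset.Ioc j L := by
        ext k
        simp only [Finset.mem_filter, Finset.mem_Icc, Finset.mem_Ioc]
        omega
      rw [Finset.sum_congr rfl hcongr, ← Finset.sum_filter, hfilter, tele ω j L hjL,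
        hwi, if_pos hiW]
      ring
    · have hwi := hwout i hiW
      have hcongr : ∀ k ∈ Finset.Icc 2 L,
          (if i ∈ (Finset.Icc k L).biUnion T then 0 else (ω (k - 1) - ω k))
            = ω (k - 1) - ω k := by
        intro k hk
        rw [Finset.mem_Icc] at hk
        rw [if_neg]
        intro hmem
        obtain ⟨m, hm1, him⟩ := Finset.mem_biUnion.mp hmem
        exact hiW (Finset.mem_biUnion.mpr
          ⟨m, by rw [Finset.mem_Icc] at hm1 ⊢; omega, him⟩)
      have h2 : Finset.Icc 2 L = Finset.Ioc 1 L := by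
        ext k; simp only [Finset.mem_Icc, Finset.mem_Ioc]; omega
      rw [Finset.sum_congr rfl hcongr, h2, tele ω 1 L hL, hwi, if_neg hiW]
      ring
  -- claim A : weighted sums decompose
  have hsd : ∀ (c : ℝ) (S A : Finset (Fin M)) (f : Fin M → ℝ),
      ∑ i ∈ S, (if i ∈ A then 0 else c * f i) = c * ∑ i ∈ S \ A, f i := by
    intro c S A f
    rw [Finset.mul_sum, Finset.sdiff_eq_filter, Finset.sum_filter]
    exact Finset.sum_congr rfl fun i _ => by by_cases hi : i ∈ A <;> simp [hi]
  have claimA : ∀ (f : Fin M → ℝ) (S : Finset (Fin M)),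
      ∑ i ∈ S, w i * f i = ω L * ∑ i ∈ S, f i + (1 - ω 1) * ∑ i ∈ S \ W, f i +
        ∑ k ∈ Finset.Icc 2 L, (ω (k - 1) - ω k) *
          ∑ i ∈ S \ (Finset.Icc k L).biUnion T, f i := by
    intro f S
    calc ∑ i ∈ S, w i * f i
        = ∑ i ∈ S, (ω L * f i + (if i ∈ W then 0 else (1 - ω 1) * f i) +
            ∑ k ∈ Finset.Icc 2 L,
              (if i ∈ (Finset.Icc k L).biUnion T then 0 else (ω (k - 1) - ω k) * f i)) := by
          refine Finset.sum_congr rfl fun i _ => ?_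
          rw [hwpt i, add_mul, add_mul, Finset.sum_mul]
          simp [ite_mul]
      _ = _ := by
          rw [Finset.sum_add_distrib, Finset.sum_add_distrib, Finset.sum_comm,
            ← Finset.mul_sum]
          congr 1
          · congr 1
            exact hsd _ _ _ _
          · exact Finset.sum_congr rfl fun k _ => hsd _ _ _ _
  -- claim B
  have claimB : ∀ (f : Fin M → ℝ) (S : Finset (Fin M)),
      ∑ i ∈ S, f i = ∑ i ∈ S, w i * f i + (1 - ω 1) * ∑ i ∈ S ∩ W, f i +
        ∑ k ∈ Finset.Icc 2 L, (ω (k - 1) - ω k) *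
          ∑ i ∈ S ∩ (Finset.Icc k L).biUnion T, f i := by
    intro f S
    rw [claimA f S]
    have hWsplit : ∑ i ∈ S ∩ W, f i + ∑ i ∈ S \ W, f i = ∑ i ∈ S, f i :=
      Finset.sum_inter_add_sum_sdiff S W f
    have h2 : Finset.Icc 2 L = Finset.Ioc 1 L := by
      ext k; simp only [Finset.mem_Icc, Finset.mem_Ioc]; omega
    have hksum : ∑ k ∈ Finset.Icc 2 L, (ω (k - 1) - ω k) *
          ∑ i ∈ S \ (Finset.Icc k L).biUnion T, f i
        + ∑ k ∈ Finset.Icc 2 L, (ω (k - 1) - ω k) *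
          ∑ i ∈ S ∩ (Finset.Icc k L).biUnion T, f i
        = (ω 1 - ω L) * ∑ i ∈ S, f i := by
      rw [← Finset.sum_add_distrib]
      calc ∑ k ∈ Finset.Icc 2 L, ((ω (k - 1) - ω k) *
              ∑ i ∈ S \ (Finset.Icc k L).biUnion T, f i
            + (ω (k - 1) - ω k) * ∑ i ∈ S ∩ (Finset.Icc k L).biUnion T, f i)
          = ∑ k ∈ Finset.Icc 2 L, (ω (k - 1) - ω k) * ∑ i ∈ S, f i := by
            refine Finset.sum_congr rfl fun k _ => ?_
            rw [← mul_add, add_comm (∑ i ∈ S \ _, f i), Finset.sum_inter_add_sum_sdiff]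
        _ = (∑ k ∈ Finset.Icc 2 L, (ω (k - 1) - ω k)) * ∑ i ∈ S, f i := by
            rw [Finset.sum_mul]
        _ = (ω 1 - ω L) * ∑ i ∈ S, f i := by rw [h2, tele ω 1 L hL]
    have hexp : (1 - ω 1) * ∑ i ∈ S ∩ W, f i + (1 - ω 1) * ∑ i ∈ S \ W, f i
        = (1 - ω 1) * ∑ i ∈ S, f i := by rw [← mul_add, hWsplit]
    have hring : ω L * ∑ i ∈ S, f i + (1 - ω 1) * ∑ i ∈ S, f i
        + (ω 1 - ω L) * ∑ i ∈ S, f i = ∑ i ∈ S, f i := by ring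
    linarith
  -- key inequality from minimality
  have tri1 : ∀ i, n i ≤ ahat i + a i := fun i => blkNorm_sub_le b xhat x i
  have tri2 : ∀ i, a i ≤ ahat i + n i := by
    intro i
    have hx : x = xhat - (xhat - x) := by funext j; simp
    calc a i = blkNorm b (xhat - (xhat - x)) i := by rw [ha, ← hx]
      _ ≤ ahat i + n i := blkNorm_sub_le b xhat (xhat - x) i
  have key : ∑ i ∈ Γᶜ, w i * n i ≤ ∑ i ∈ Γ, w i * n i + 2 * ∑ i ∈ Γᶜ, w i * a i := by
    have e1 : ∑ i ∈ Γ, w i * (a i - n i) + ∑ i ∈ Γᶜ, w i * (n i - a i)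
        ≤ ∑ i : Fin M, w i * ahat i := by
      rw [← Finset.sum_add_sum_compl Γ (fun i => w i * ahat i)]
      refine add_le_add (Finset.sum_le_sum fun i _ => ?_)
        (Finset.sum_le_sum fun i _ => ?_)
      · exact mul_le_mul_of_nonneg_left (by linarith [tri2 i]) (hw0 i)
      · exact mul_le_mul_of_nonneg_left (by linarith [tri1 i]) (hw0 i)
    have e2 : ∑ i : Fin M, w i * a i = ∑ i ∈ Γ, w i * a i + ∑ i ∈ Γᶜ, w i * a i :=
      (Finset.sum_add_sum_compl Γ (fun i => w i * a i)).symm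
    have e3 : ∑ i ∈ Γ, w i * (a i - n i) = ∑ i ∈ Γ, w i * a i - ∑ i ∈ Γ, w i * n i := by
      rw [← Finset.sum_sub_distrib]
      exact Finset.sum_congr rfl fun i _ => by ring
    have e4 : ∑ i ∈ Γᶜ, w i * (n i - a i)
        = ∑ i ∈ Γᶜ, w i * n i - ∑ i ∈ Γᶜ, w i * a i := by
      rw [← Finset.sum_sub_distrib]
      exact Finset.sum_congr rfl fun i _ => by ring
    linarith
  -- symmetric-difference sums
  have hsymm : ∀ (A : Finset (Fin M)) (f : Fin M → ℝ),
      ∑ i ∈ (Γ ∪ A) \ (A ∩ Γ), f i = ∑ i ∈ Γ \ A, f i + ∑ i ∈ Γᶜ ∩ A, f i := by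
    intro A f
    have hdisj' : Disjoint (Γ \ A) (Γᶜ ∩ A) := by
      rw [Finset.disjoint_left]
      intro i hi1 hi2
      rw [Finset.mem_sdiff] at hi1
      rw [Finset.mem_inter, Finset.mem_compl] at hi2
      exact hi2.1 hi1.1
    rw [← Finset.sum_union hdisj']
    congr 1
    ext i
    simp only [Finset.mem_sdiff, Finset.mem_union, Finset.mem_inter, Finset.mem_compl]
    tauto
  -- last term identity
  have hpair : ((Finset.Icc 1 L : Finset ℕ) : Set ℕ).PairwiseDisjoint
      (fun i => T i ∩ Γᶜ) := by
    intro i hi j hj hij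
    exact Finset.disjoint_left.mpr fun x hx1 hx2 =>
      (Finset.disjoint_left.mp
        (hdisj i (by simpa using hi) j (by simpa using hj) hij))
        (Finset.mem_inter.mp hx1).1 (Finset.mem_inter.mp hx2).1
  have hbiU : Γᶜ ∩ W = (Finset.Icc 1 L).biUnion (fun i => T i ∩ Γᶜ) := by
    ext j
    simp only [Finset.mem_inter, Finset.mem_biUnion, hW]
    tauto
  have hWc : (Wᶜ ∩ Γᶜ : Finset (Fin M)) = Γᶜ \ W := by
    ext i
    simp only [Finset.mem_inter, Finset.mem_compl, Finset.mem_sdiff]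
    tauto
  have hA : ∑ j ∈ Γᶜ, a j
      = (∑ i ∈ Finset.Icc 1 L, ∑ j ∈ T i ∩ Γᶜ, a j) + ∑ j ∈ Γᶜ \ W, a j := by
    rw [← Finset.sum_inter_add_sum_sdiff Γᶜ W a]
    congr 1
    rw [hbiU]
    exact Finset.sum_biUnion hpair
  have hLHS : ∑ j ∈ Γᶜ, w j * a j
      = (∑ i ∈ Finset.Icc 1 L, ω i * ∑ j ∈ T i ∩ Γᶜ, a j) + ∑ j ∈ Γᶜ \ W, a j := by
    rw [← Finset.sum_inter_add_sum_sdiff Γᶜ W (fun j => w j * a j)]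
    congr 1
    · rw [hbiU, Finset.sum_biUnion hpair]
      refine Finset.sum_congr rfl fun i hi => ?_
      rw [Finset.mul_sum]
      refine Finset.sum_congr rfl fun j hj => ?_
      rw [hwin i hi j (Finset.mem_inter.mp hj).1]
    · refine Finset.sum_congr rfl fun j hj => ?_
      rw [Finset.mem_sdiff] at hj
      rw [hwout j hj.2, one_mul]
  have hlast : ∑ j ∈ Γᶜ, w j * a j
      = (∑ i ∈ Finset.Icc 1 L, ω i) * ∑ j ∈ Γᶜ, a j +
        (1 - ∑ i ∈ Finset.Icc 1 L, ω i) * ∑ j ∈ Wᶜ ∩ Γᶜ, a j -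
        ∑ i ∈ Finset.Icc 1 L, ((∑ m ∈ Finset.Icc 1 L, ω m) - ω i) *
          ∑ j ∈ T i ∩ Γᶜ, a j := by
    rw [hLHS, hWc, hA]
    have hsub : ∑ i ∈ Finset.Icc 1 L, ((∑ m ∈ Finset.Icc 1 L, ω m) - ω i) *
          ∑ j ∈ T i ∩ Γᶜ, a j
        = (∑ m ∈ Finset.Icc 1 L, ω m) *
            (∑ i ∈ Finset.Icc 1 L, ∑ j ∈ T i ∩ Γᶜ, a j)
          - ∑ i ∈ Finset.Icc 1 L, ω i * ∑ j ∈ T i ∩ Γᶜ, a j := by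
      rw [Finset.mul_sum, ← Finset.sum_sub_distrib]
      exact Finset.sum_congr rfl fun i _ => by ring
    rw [hsub]
    ring
  -- final assembly
  calc ∑ i ∈ Γᶜ, n i
      = ∑ i ∈ Γᶜ, w i * n i + (1 - ω 1) * ∑ i ∈ Γᶜ ∩ W, n i +
        ∑ k ∈ Finset.Icc 2 L, (ω (k - 1) - ω k) *
          ∑ i ∈ Γᶜ ∩ (Finset.Icc k L).biUnion T, n i := claimB n Γᶜ
    _ ≤ (∑ i ∈ Γ, w i * n i + 2 * ∑ i ∈ Γᶜ, w i * a i) +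
        (1 - ω 1) * ∑ i ∈ Γᶜ ∩ W, n i +
        ∑ k ∈ Finset.Icc 2 L, (ω (k - 1) - ω k) *
          ∑ i ∈ Γᶜ ∩ (Finset.Icc k L).biUnion T, n i := by linarith [key]
    _ = _ := by
        rw [claimA n Γ, hlast]
        simp_rw [hsymm, mul_add]
        rw [Finset.sum_add_distrib]
        ring
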